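/- Assume F has a bounded density, let x₀>0, let W₀:[0,x₀]→ℝ be continuous, positive, increasing and differentiable at x₀, and let U be the unique twice continuously differentiable solution of L*(U,W₀)=0 on (x₀,∞) with U(x₀)=W₀(x₀) and U'(x₀)=W₀'(x₀). Define γ̃(U,W₀)(x) = min{ 1, 2( M(U,W₀)(x) − pU'(x) ) / ( r x U'(x) ) }. Then L*(U,W₀)(x) = L_{γ̃(U,W₀)(x)}(U,W₀)(x) = 0 for all x ∈ (x₀,∞). -/

import Mathlib

/-!
For `x > x₀` the map `γ ↦ L_γ(U,W₀)(x)` is the quadratic `Aγ² + Bγ + K` with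
`A = σ²x²U''(x)/2`, `B = r x U'(x)`, `K = pU'(x) - M(U,W₀)(x)`, and its supremum over `[0, 1]`
vanishes. Once `U'(x) > 0`, i.e. `B > 0`, the maximiser is `min 1 (-B/(2A))`, and since the
maximum is `0` this equals `min 1 (-2K/B) = γ̃(U,W₀)(x)`.

Positivity of `U'`: where `U' ≤ 0` and `M > 0` the supremum can only vanish if `A > 0`, so there
`U'' > 0` and `U'` can only cross zero upwards. Near `x₀`, `M` is close to `c W₀(x₀) > 0` by
right continuity of `F`; a point there with `U' ≤ 0` would force `U' < 0` and increasing all the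
way down to `x₀`, against `U'(x₀+) = W₀'(x₀) ≥ 0`. At the first later point `x₁` with
`U'(x₁) ≤ 0`, `U` is increasing on `[x₀, x₁]`, so `M(x₁) ≥ c U(x₁) > 0`, and `U''(x₁) > 0`
contradicts `U' > 0` just left of `x₁`.
-/

open MeasureTheory Set Filter

/-- `M(U,W₀)(x) = (c+β)U(x) - β∫₀^{x-x₀} U(x-α)dF(α) - β∫_{x-x₀}^{x} W₀(x-α)dF(α)`. -/
noncomputable def Mop2 (β c : ℝ) (F : StieltjesFunction ℝ) (x₀ : ℝ)
    (U W₀ : ℝ → ℝ) (x : ℝ) : ℝ :=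
  (c + β) * U x - β * (∫ α in Icc (0 : ℝ) (x - x₀), U (x - α) ∂F.measure)
    - β * ∫ α in Ioc (x - x₀) x, W₀ (x - α) ∂F.measure

/-- `L_γ(U,W₀)(x) = σ²γ²x²U''(x)/2 + (p + rγx)U'(x) - M(U,W₀)(x)`. -/
noncomputable def Lg2 (p β c r σ : ℝ) (F : StieltjesFunction ℝ) (x₀ : ℝ)
    (γ : ℝ) (U W₀ : ℝ → ℝ) (x : ℝ) : ℝ :=
  σ ^ 2 * γ ^ 2 * x ^ 2 * deriv (deriv U) x / 2 + (p + r * γ * x) * deriv U x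
    - Mop2 β c F x₀ U W₀ x

/-- `L*(U,W₀)(x) = sup_{γ ∈ [0,1]} L_γ(U,W₀)(x)`. -/
noncomputable def Lstar2 (p β c r σ : ℝ) (F : StieltjesFunction ℝ) (x₀ : ℝ)
    (U W₀ : ℝ → ℝ) (x : ℝ) : ℝ :=
  ⨆ γ : Icc (0 : ℝ) 1, Lg2 p β c r σ F x₀ (γ : ℝ) U W₀ x

open Topology

section Quadratic

variable {A B K : ℝ}

lemma iSup_quadratic_eq_of_forall_le {v : ℝ} (hv : v ∈ Icc (0 : ℝ) 1)
    (hmax : ∀ γ ∈ Icc (0 : ℝ) 1, A * γ ^ 2 + B * γ + K ≤ A * v ^ 2 + B * v + K) :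
    ⨆ γ : Icc (0 : ℝ) 1, (A * (γ : ℝ) ^ 2 + B * γ + K) = A * v ^ 2 + B * v + K :=
  le_antisymm (ciSup_le fun γ => hmax γ γ.2)
    (le_ciSup_of_le ⟨_, forall_mem_range.2 fun γ => hmax γ γ.2⟩ ⟨v, hv⟩ le_rfl)

lemma pos_of_iSup_quadratic_eq_zero (hB : B ≤ 0) (hK : K < 0)
    (h : ⨆ γ : Icc (0 : ℝ) 1, (A * (γ : ℝ) ^ 2 + B * γ + K) = 0) : 0 < A := by
  by_contra! hA
  have hle : ⨆ γ : Icc (0 : ℝ) 1, (A * (γ : ℝ) ^ 2 + B * γ + K) ≤ K :=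
    ciSup_le fun γ => by nlinarith [γ.2.1, sq_nonneg (γ : ℝ)]
  linarith

/-- The maximiser of `A γ² + B γ + K` over `[0, 1]` is `min 1 (-B / (2A))`; when the maximum is
`0`, the vertex equation `2Aγ + B = 0` turns this into `min 1 (-2K / B)`. -/
lemma quadratic_eq_zero_of_iSup_eq_zero (hB : 0 < B)
    (h : ⨆ γ : Icc (0 : ℝ) 1, (A * (γ : ℝ) ^ 2 + B * γ + K) = 0) :
    A * min 1 (-2 * K / B) ^ 2 + B * min 1 (-2 * K / B) + K = 0 := by
  rcases le_or_gt 0 (2 * A + B) with hAB | hAB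
  · have hmax := iSup_quadratic_eq_of_forall_le (A := A) (B := B) (K := K)
      ⟨zero_le_one, le_rfl⟩ fun γ hγ => by
        nlinarith [mul_nonneg (mul_nonneg hγ.1 (sub_nonneg.2 hγ.2)) hAB,
          mul_nonneg (sq_nonneg (1 - γ)) (by linarith : 0 ≤ A + B)]
    have hq : A + B + K = 0 := by simpa [h] using hmax.symm
    rw [min_eq_left (by rw [le_div_iff₀ hB]; linarith)]
    linarith
  · have hA : A < 0 := by linarith
    have hA0 : A ≠ 0 := hA.ne
    set v := -B / (2 * A) with hv
    have hvertex : 2 * A * v + B = 0 := by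
      rw [hv]
      field_simp
      ring
    have hv0 : 0 < v := div_pos_of_neg_of_neg (by linarith) (by linarith)
    have hv1 : v < 1 := by rw [hv, div_lt_one_of_neg (by linarith)]; linarith
    have hmax := iSup_quadratic_eq_of_forall_le (A := A) (B := B) (K := K)
      ⟨hv0.le, hv1.le⟩ fun γ _ => by
        nlinarith [mul_nonpos_of_nonpos_of_nonneg hA.le (sq_nonneg (γ - v))]
    have hq : A * v ^ 2 + B * v + K = 0 := by rw [← hmax, h]
    have hK : -2 * K / B = v := by
      rw [div_eq_iff hB.ne']
      linear_combination (-2 : ℝ) * hq + v * hvertex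
    rw [hK, min_eq_right hv1.le, hq]

end Quadratic

section Operators

variable {p β c r σ x₀ x : ℝ} {F : StieltjesFunction ℝ} {U W₀ : ℝ → ℝ}

lemma Lg2_eq_quadratic (γ : ℝ) :
    Lg2 p β c r σ F x₀ γ U W₀ x = σ ^ 2 * x ^ 2 * deriv (deriv U) x / 2 * γ ^ 2
      + r * x * deriv U x * γ + (p * deriv U x - Mop2 β c F x₀ U W₀ x) := by
  unfold Lg2
  ring

lemma Lstar2_eq_iSup_quadratic :
    Lstar2 p β c r σ F x₀ U W₀ x = ⨆ γ : Icc (0 : ℝ) 1, (σ ^ 2 * x ^ 2 * deriv (deriv U) x / 2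
      * (γ : ℝ) ^ 2 + r * x * deriv U x * γ + (p * deriv U x - Mop2 β c F x₀ U W₀ x)) := by
  simp only [Lstar2, Lg2_eq_quadratic]

lemma deriv_deriv_pos_of_Lstar2_eq_zero (hp : 0 ≤ p) (hr : 0 ≤ r) (hσ : σ ≠ 0) (hx : 0 < x)
    (h : Lstar2 p β c r σ F x₀ U W₀ x = 0) (hU' : deriv U x ≤ 0)
    (hM : 0 < Mop2 β c F x₀ U W₀ x) : 0 < deriv (deriv U) x := by
  rw [Lstar2_eq_iSup_quadratic] at h
  have hA := pos_of_iSup_quadratic_eq_zero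
    (mul_nonpos_of_nonneg_of_nonpos (mul_nonneg hr hx.le) hU')
    (by nlinarith [mul_nonpos_of_nonneg_of_nonpos hp hU']) h
  have : 0 < σ ^ 2 * x ^ 2 := by positivity
  nlinarith

end Operators

lemma setIntegral_le_mul_measureReal {X : Type*} [MeasurableSpace X] {μ : Measure X}
    {s : Set X} {f : X → ℝ} {C : ℝ} (hs : MeasurableSet s) (hμs : μ s ≠ ⊤) (hC : 0 ≤ C)
    (hf : ∀ x ∈ s, f x ≤ C) : ∫ x in s, f x ∂μ ≤ C * μ.real s := by
  by_cases hfi : IntegrableOn f s μ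
  · calc ∫ x in s, f x ∂μ ≤ ∫ _ in s, C ∂μ :=
          setIntegral_mono_on hfi (integrableOn_const hμs) hs hf
      _ = C * μ.real s := by rw [setIntegral_const, smul_eq_mul, mul_comm]
  · rw [integral_undef hfi]
    positivity

lemma StieltjesFunction.measure_Icc_zero {F : StieltjesFunction ℝ}
    (hF0 : ∀ x ≤ 0, F x = 0) (t : ℝ) : F.measure (Icc 0 t) = ENNReal.ofReal (F t) := by
  have hlim : Tendsto F (𝓝[<] 0) (𝓝 0) :=
    tendsto_const_nhds.congr' <| eventually_nhdsWithin_of_forall fun y hy =>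
      (hF0 y (le_of_lt hy)).symm
  rw [F.measure_Icc, leftLim_eq_of_tendsto hlim, sub_zero]

section Mop2

variable {β c x₀ x : ℝ} {F : StieltjesFunction ℝ} {U W₀ : ℝ → ℝ}

lemma le_Mop2 {CU CW : ℝ} (hβ : 0 ≤ β) (hF0 : ∀ x ≤ 0, F x = 0) (hx₀ : 0 ≤ x₀) (hx : x₀ ≤ x)
    (hCU : 0 ≤ CU) (hCW : 0 ≤ CW) (hU : ∀ y ∈ Icc x₀ x, U y ≤ CU)
    (hW₀ : ∀ y ∈ Icc 0 x₀, W₀ y ≤ CW) :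
    (c + β) * U x - β * CU * F (x - x₀) - β * CW * (F x - F (x - x₀))
      ≤ Mop2 β c F x₀ U W₀ x := by
  have hF : 0 ≤ F (x - x₀) := hF0 0 le_rfl ▸ F.mono (sub_nonneg.2 hx)
  have hFx : F (x - x₀) ≤ F x := F.mono (by linarith)
  have h₁ : ∫ α in Icc 0 (x - x₀), U (x - α) ∂F.measure ≤ CU * F (x - x₀) := by
    have hμ := F.measure_Icc_zero hF0 (x - x₀)
    calc _ ≤ CU * F.measure.real (Icc 0 (x - x₀)) :=
          setIntegral_le_mul_measureReal measurableSet_Icc (by simp [hμ]) hCU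
            fun α hα => hU _ ⟨by linarith [hα.2], by linarith [hα.1]⟩
      _ = CU * F (x - x₀) := by rw [measureReal_def, hμ, ENNReal.toReal_ofReal hF]
  have h₂ : ∫ α in Ioc (x - x₀) x, W₀ (x - α) ∂F.measure ≤ CW * (F x - F (x - x₀)) := by
    have hμ := F.measure_Ioc (x - x₀) x
    calc _ ≤ CW * F.measure.real (Ioc (x - x₀) x) :=
          setIntegral_le_mul_measureReal measurableSet_Ioc (by simp [hμ]) hCW
            fun α hα => hW₀ _ ⟨by linarith [hα.2], by linarith [hα.1]⟩
      _ = CW * (F x - F (x - x₀)) := by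
          rw [measureReal_def, hμ, ENNReal.toReal_ofReal (by linarith)]
  unfold Mop2
  nlinarith [mul_le_mul_of_nonneg_left h₁ hβ, mul_le_mul_of_nonneg_left h₂ hβ]

lemma mul_le_Mop2_of_monotoneOn (hβ : 0 ≤ β) (hF0 : ∀ x ≤ 0, F x = 0) (hF1 : F x ≤ 1)
    (hx₀ : 0 ≤ x₀) (hx : x₀ ≤ x) (hU : MonotoneOn U (Icc x₀ x))
    (hW₀ : MonotoneOn W₀ (Icc 0 x₀)) (hUx₀ : U x₀ = W₀ x₀) (hW₀x₀ : 0 ≤ W₀ x₀) :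
    c * U x ≤ Mop2 β c F x₀ U W₀ x := by
  have hx₀x : U x₀ ≤ U x := hU ⟨le_rfl, hx⟩ ⟨hx, le_rfl⟩ hx
  refine le_trans ?_ (le_Mop2 hβ hF0 hx₀ hx (by linarith) (by linarith)
    (fun y hy => hU hy ⟨hx, le_rfl⟩ hy.2)
    (fun y hy => (hW₀ hy ⟨hx₀, le_rfl⟩ hy.2).trans (hUx₀ ▸ hx₀x)))
  nlinarith [mul_nonneg hβ (hW₀x₀.trans (hUx₀ ▸ hx₀x))]

lemma eventually_pos_Mop2 (hβ : 0 ≤ β) (hc : 0 < c) (hF0 : ∀ x ≤ 0, F x = 0)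
    (hF01 : ∀ x, F x ∈ Icc (0 : ℝ) 1) (hW₀ : MonotoneOn W₀ (Icc 0 x₀)) (hx₀ : 0 ≤ x₀)
    (hW₀x₀ : 0 < W₀ x₀) (hUc : ContinuousWithinAt U (Ici x₀) x₀) (hUx₀ : U x₀ = W₀ x₀) :
    ∀ᶠ x in 𝓝[>] x₀, 0 < Mop2 β c F x₀ U W₀ x := by
  set w := W₀ x₀
  have hU : Tendsto U (𝓝[>] x₀) (𝓝 w) := hUx₀ ▸ (hUc.mono Ioi_subset_Ici_self).tendsto
  have hshift : Tendsto (fun x => x - x₀) (𝓝[>] x₀) (𝓝[≥] 0) :=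
    tendsto_nhdsWithin_of_tendsto_nhds_of_eventually_within _
      (by simpa using ((continuous_sub_right x₀).tendsto x₀).mono_left nhdsWithin_le_nhds)
      (eventually_nhdsWithin_of_forall fun x hx => sub_nonneg.2 (le_of_lt (α := ℝ) hx))
  have hF : Tendsto (fun x => F (x - x₀)) (𝓝[>] x₀) (𝓝 0) :=
    hF0 0 le_rfl ▸ (F.right_continuous 0).tendsto.comp hshift
  -- `le_Mop2` with `CU = w + 1`, `CW = w`; the bound tends to `c w > 0`
  have hlim : Tendsto (fun x => (c + β) * U x - β * (w + 1) * F (x - x₀) - β * w)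
      (𝓝[>] x₀) (𝓝 (c * w)) := by
    convert ((hU.const_mul (c + β)).sub (hF.const_mul (β * (w + 1)))).sub_const (β * w)
      using 2
    ring
  obtain ⟨b, hb, hUb⟩ := mem_nhdsGE_iff_exists_Ico_subset.1
    (hUc.eventually (gt_mem_nhds (by rw [hUx₀]; linarith : U x₀ < w + 1)))
  filter_upwards [hlim.eventually (lt_mem_nhds (mul_pos hc hW₀x₀)), Ioo_mem_nhdsGT hb]
    with x hL hx
  have hM := le_Mop2 (c := c) hβ hF0 hx₀ hx.1.le (by linarith) hW₀x₀.le
    (fun y hy => (hUb ⟨hy.1, hy.2.trans_lt hx.2⟩).le)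
    (fun y hy => hW₀ hy ⟨hx₀, le_rfl⟩ hy.2)
  nlinarith [mul_le_mul_of_nonneg_left (by linarith [(hF01 x).2, (hF01 (x - x₀)).1] :
    F x - F (x - x₀) ≤ 1) (mul_nonneg hβ hW₀x₀.le)]

end Mop2

section Calculus

lemma HasDerivAt.eventually_nhdsLT_lt {g : ℝ → ℝ} {g' x : ℝ} (hg : HasDerivAt g g' x)
    (hg' : 0 < g') : ∀ᶠ t in 𝓝[<] x, g t < g x := by
  filter_upwards [nhdsLT_le_nhdsNE x ((hasDerivAt_iff_tendsto_slope.1 hg).eventually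
    (lt_mem_nhds hg')), self_mem_nhdsWithin] with t ht htx
  exact (slope_pos_iff_gt htx).1 ht

lemma HasDerivWithinAt.le_of_deriv_le {f : ℝ → ℝ} {a b d m : ℝ}
    (hd : HasDerivWithinAt f d (Ici a) a) (hab : a < b) (hf : ContinuousOn f (Icc a b))
    (hf' : DifferentiableOn ℝ f (Ioo a b))
    (hle : ∀ x ∈ Ioo a b, deriv f x ≤ m) : d ≤ m := by
  have hslope : Tendsto (slope f a) (𝓝[>] a) (𝓝 d) := by
    simpa using hasDerivWithinAt_iff_tendsto_slope.1 hd
  refine le_of_tendsto hslope ?_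
  filter_upwards [Ioo_mem_nhdsGT hab] with t ht
  have := (convex_Icc a b).image_sub_le_mul_sub_of_deriv_le hf (by rwa [interior_Icc])
    (by rwa [interior_Icc]) a (left_mem_Icc.2 hab.le) t (Ioo_subset_Icc_self ht) ht.1.le
  rw [slope_def_field, div_le_iff₀ (sub_pos.2 ht.1)]
  linarith

lemma nonpos_of_nonpos_of_deriv_pos_of_eq_zero {g g' : ℝ → ℝ} {a b : ℝ} (hab : a ≤ b)
    (hg : ∀ t ∈ Icc a b, HasDerivAt g (g' t) t) (hzero : ∀ t ∈ Icc a b, g t = 0 → 0 < g' t)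
    (hb : g b ≤ 0) : g a ≤ 0 := by
  have hmem : ∀ s ∈ Icc (-b) (-a), -s ∈ Icc a b := fun s hs =>
    ⟨by linarith [hs.2], by linarith [hs.1]⟩
  have hderiv : ∀ s ∈ Icc (-b) (-a), HasDerivAt (fun s => g (-s)) (-g' (-s)) s := fun s hs => by
    simpa [Function.comp_def] using (hg (-s) (hmem s hs)).comp s (hasDerivAt_neg s)
  have := image_le_of_deriv_right_lt_deriv_boundary' (f := fun s => g (-s))
    (f' := fun s => -g' (-s)) (B := 0) (B' := 0)
    (fun s hs => (hderiv s hs).continuousAt.continuousWithinAt)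
    (fun s hs => (hderiv s (Ico_subset_Icc_self hs)).hasDerivWithinAt) (by simpa using hb)
    continuousOn_const (fun _ _ => hasDerivWithinAt_const _ _ _)
    (fun s hs h => by simpa using hzero (-s) (hmem s (Ico_subset_Icc_self hs)) h)
    (right_mem_Icc.2 (neg_le_neg hab))
  simpa using this

variable {U M : ℝ → ℝ} {a b : ℝ}

lemma ContDiffOn.hasDerivAt_deriv {s : Set ℝ} {x : ℝ} (hU : ContDiffOn ℝ 1 U s) (hs : IsOpen s)
    (hx : x ∈ s) : HasDerivAt U (deriv U x) x :=
  ((hU.differentiableOn one_ne_zero).differentiableAt (hs.mem_nhds hx)).hasDerivAt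

lemma ContDiffOn.hasDerivAt_deriv_deriv {s : Set ℝ} {x : ℝ} (hU : ContDiffOn ℝ 2 U s)
    (hs : IsOpen s) (hx : x ∈ s) : HasDerivAt (deriv U) (deriv (deriv U) x) x :=
  (hU.deriv_of_isOpen hs (by norm_num)).hasDerivAt_deriv hs hx

lemma deriv_pos_of_mem_Ioo (hU : ContDiffOn ℝ 2 U (Ioi a)) (hUc : ContinuousOn U (Ici a))
    {d : ℝ} (hd : HasDerivWithinAt U d (Ici a) a) (hd0 : 0 ≤ d)
    (hconv : ∀ x ∈ Ioi a, deriv U x ≤ 0 → 0 < M x → 0 < deriv (deriv U) x)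
    (hM : ∀ x ∈ Ioo a b, 0 < M x) : ∀ y ∈ Ioo a b, 0 < deriv U y := by
  intro y hy
  by_contra! hy'
  have hconv' : ∀ t ∈ Ioc a y, deriv U t ≤ 0 → 0 < deriv (deriv U) t := fun t ht h =>
    hconv t ht.1 h (hM t ⟨ht.1, ht.2.trans_lt hy.2⟩)
  have hnonpos : ∀ t ∈ Ioc a y, deriv U t ≤ 0 := fun t ht =>
    nonpos_of_nonpos_of_deriv_pos_of_eq_zero ht.2
      (fun s hs => hU.hasDerivAt_deriv_deriv isOpen_Ioi (ht.1.trans_le hs.1))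
      (fun s hs h => hconv' s ⟨ht.1.trans_le hs.1, hs.2⟩ h.le) hy'
  have hmono : StrictMonoOn (deriv U) (Ioc a y) := by
    refine strictMonoOn_of_deriv_pos (convex_Ioc a y)
      ((hU.continuousOn_deriv_of_isOpen isOpen_Ioi (by norm_num)).mono fun t ht => ht.1)
      fun t ht => ?_
    rw [interior_Ioc] at ht
    exact hconv' t (Ioo_subset_Ioc_self ht) (hnonpos t (Ioo_subset_Ioc_self ht))
  obtain ⟨m, ham, hmy⟩ := exists_between hy.1
  have hm : m ∈ Ioc a y := ⟨ham, hmy.le⟩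
  have hdm : d ≤ deriv U m := hd.le_of_deriv_le hm.1 (hUc.mono Icc_subset_Ici_self)
    ((hU.differentiableOn (by norm_num)).mono fun t ht => ht.1)
    fun t ht => (hmono ⟨ht.1, ht.2.le.trans hm.2⟩ hm ht.2).le
  linarith [hmono hm ⟨hy.1, le_rfl⟩ hmy]

lemma deriv_pos_of_deriv_pos_on_Ioo (hU : ContDiffOn ℝ 2 U (Ioi a))
    (hUc : ContinuousOn U (Ici a))
    (hconv : ∀ x ∈ Ioi a, deriv U x ≤ 0 → 0 < M x → 0 < deriv (deriv U) x)
    (hab : a < b) (hnear : ∀ y ∈ Ioo a b, 0 < deriv U y)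
    (hM : ∀ x ∈ Ioi a, MonotoneOn U (Icc a x) → 0 < M x) :
    ∀ y ∈ Ioi a, 0 < deriv U y := by
  intro y hy
  by_contra! hy'
  have hby : b ≤ y := not_lt.1 fun h => (hnear y ⟨hy, h⟩).not_ge hy'
  obtain ⟨a', ha'⟩ := exists_between hab
  -- the first point of `[a', y]` where `deriv U` is nonpositive
  set S := Icc a' y ∩ deriv U ⁻¹' Iic 0
  have hSbdd : BddBelow S := ⟨a', fun t ht => ht.1.1⟩
  have hx₁ : sInf S ∈ S :=
    ((hU.continuousOn_deriv_of_isOpen isOpen_Ioi (by norm_num)).mono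
      fun t ht => ha'.1.trans_le ht.1).preimage_isClosed_of_isClosed isClosed_Icc isClosed_Iic
      |>.csInf_mem ⟨y, ⟨ha'.2.le.trans hby, le_rfl⟩, hy'⟩ hSbdd
  set x₁ := sInf S
  have hax₁ : a < x₁ := ha'.1.trans_le hx₁.1.1
  have hpos : ∀ t ∈ Ioo a x₁, 0 < deriv U t := by
    intro t ht
    by_contra! h
    rcases lt_or_ge t a' with h' | h'
    · exact (hnear t ⟨ht.1, h'.trans ha'.2⟩).not_ge h
    · exact ht.2.not_ge (csInf_le hSbdd ⟨⟨h', ht.2.le.trans hx₁.1.2⟩, h⟩)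
  have hUmono : MonotoneOn U (Icc a x₁) := by
    refine monotoneOn_of_deriv_nonneg (convex_Icc a x₁) (hUc.mono Icc_subset_Ici_self)
      ?_ fun t ht => ?_
    · rw [interior_Icc]
      exact (hU.differentiableOn (by norm_num)).mono fun t ht => ht.1
    · rw [interior_Icc] at ht
      exact (hpos t ht).le
  have hU'' := hconv x₁ hax₁ hx₁.2 (hM x₁ hax₁ hUmono)
  obtain ⟨t, hlt, ht⟩ := ((hU.hasDerivAt_deriv_deriv isOpen_Ioi hax₁).eventually_nhdsLT_lt
    hU'' |>.and (Ioo_mem_nhdsLT hax₁)).exists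
  exact (hpos t ht).not_gt (hlt.trans_le hx₁.2)

end Calculus

lemma deriv_pos_of_Lstar2_eq_zero {p β c r σ x₀ d₀ : ℝ} {F : StieltjesFunction ℝ}
    {U W₀ : ℝ → ℝ} (hp : 0 ≤ p) (hβ : 0 ≤ β) (hr : 0 ≤ r) (hc : 0 < c) (hσ : σ ≠ 0)
    (hF0 : ∀ x ≤ 0, F x = 0) (hF01 : ∀ x, F x ∈ Icc (0 : ℝ) 1) (hx₀ : 0 < x₀)
    (hW₀pos : 0 < W₀ x₀) (hW₀mono : MonotoneOn W₀ (Icc 0 x₀))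
    (hd₀ : HasDerivWithinAt W₀ d₀ (Icc 0 x₀) x₀) (hUc : ContinuousOn U (Ici x₀))
    (hU2 : ContDiffOn ℝ 2 U (Ioi x₀)) (hUx₀ : U x₀ = W₀ x₀)
    (hUd : HasDerivWithinAt U d₀ (Ici x₀) x₀)
    (hUsol : ∀ x ∈ Ioi x₀, Lstar2 p β c r σ F x₀ U W₀ x = 0) :
    ∀ x ∈ Ioi x₀, 0 < deriv U x := by
  have hconv : ∀ x ∈ Ioi x₀, deriv U x ≤ 0 → 0 < Mop2 β c F x₀ U W₀ x →
      0 < deriv (deriv U) x := fun x hx =>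
    deriv_deriv_pos_of_Lstar2_eq_zero hp hr hσ (hx₀.trans hx) (hUsol x hx)
  have hacc : AccPt x₀ (𝓟 (Icc 0 x₀)) := by
    rw [accPt_principal_iff_nhdsWithin]
    exact (right_nhdsWithin_Ico_neBot hx₀).mono
      (nhdsWithin_mono _ fun _ h => ⟨Ico_subset_Icc_self h, h.2.ne⟩)
  obtain ⟨b, hb, hMb⟩ := mem_nhdsGT_iff_exists_Ioo_subset.1 <| eventually_pos_Mop2 hβ hc hF0
    hF01 hW₀mono hx₀.le hW₀pos (hUc x₀ self_mem_Ici) hUx₀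
  refine deriv_pos_of_deriv_pos_on_Ioo hU2 hUc hconv hb
    (deriv_pos_of_mem_Ioo hU2 hUc hUd (hd₀.nonneg_of_monotoneOn hacc hW₀mono) hconv hMb)
    fun x hx hmono => ?_
  have hUx : W₀ x₀ ≤ U x := hUx₀ ▸ hmono ⟨le_rfl, hx.le⟩ ⟨hx.le, le_rfl⟩ hx.le
  exact (mul_pos hc (hW₀pos.trans_le hUx)).trans_le
    (mul_le_Mop2_of_monotoneOn hβ hF0 (hF01 x).2 hx₀.le hx.le hmono hW₀mono hUx₀ hW₀pos.le)

theorem continuation_gamma_formula_general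
    (p β c r σ : ℝ) (hp : 0 < p) (hβ : 0 < β) (hr : 0 < r) (hrc : r < c) (hσ : 0 < σ)
    (F : StieltjesFunction ℝ)
    (hF01 : ∀ x : ℝ, F x ∈ Icc (0 : ℝ) 1)
    (hF0 : ∀ x : ℝ, x ≤ 0 → F x = 0)
    (x₀ : ℝ) (hx₀ : 0 < x₀)
    (W₀ : ℝ → ℝ)
    (hW₀pos : ∀ x ∈ Icc (0 : ℝ) x₀, 0 < W₀ x)
    (hW₀mono : StrictMonoOn W₀ (Icc 0 x₀))
    (d₀ : ℝ) (hd₀ : HasDerivWithinAt W₀ d₀ (Icc 0 x₀) x₀)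
    (U : ℝ → ℝ)
    (hUc : ContinuousOn U (Ici x₀)) (hU2 : ContDiffOn ℝ 2 U (Ioi x₀))
    (hUx₀ : U x₀ = W₀ x₀) (hUd : HasDerivWithinAt U d₀ (Ici x₀) x₀)
    (hUsol : ∀ x ∈ Ioi x₀, Lstar2 p β c r σ F x₀ U W₀ x = 0) :
    ∀ x ∈ Ioi x₀,
      Lstar2 p β c r σ F x₀ U W₀ x =
        Lg2 p β c r σ F x₀
          (min 1 (2 * (Mop2 β c F x₀ U W₀ x - p * deriv U x) / (r * x * deriv U x)))
          U W₀ x ∧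
      Lg2 p β c r σ F x₀
        (min 1 (2 * (Mop2 β c F x₀ U W₀ x - p * deriv U x) / (r * x * deriv U x)))
        U W₀ x = 0 := by
  intro x hx
  have hU' := deriv_pos_of_Lstar2_eq_zero hp.le hβ.le hr.le (hr.trans hrc) hσ.ne' hF0 hF01 hx₀
    (hW₀pos x₀ ⟨hx₀.le, le_rfl⟩) hW₀mono.monotoneOn hd₀ hUc hU2 hUx₀ hUd hUsol x hx
  have hB : 0 < r * x * deriv U x := by have := hx₀.trans hx; positivity
  have hzero := quadratic_eq_zero_of_iSup_eq_zero hB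
    (Lstar2_eq_iSup_quadratic.symm.trans (hUsol x hx))
  have hval : Lg2 p β c r σ F x₀
      (min 1 (2 * (Mop2 β c F x₀ U W₀ x - p * deriv U x) / (r * x * deriv U x))) U W₀ x = 0 := by
    rw [Lg2_eq_quadratic, show 2 * (Mop2 β c F x₀ U W₀ x - p * deriv U x) =
      -2 * (p * deriv U x - Mop2 β c F x₀ U W₀ x) by ring]
    exact hzero
  exact ⟨by rw [hUsol x hx, hval], hval⟩

/-- (Proposition 6.3(b)): assume `F` has a bounded density; let `U` be the unique `C²`
solution of `L*(U,W₀) = 0` on `(x₀,∞)` with `U x₀ = W₀ x₀`, `U'(x₀) = W₀'(x₀)`. Then with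
`γ̃(U,W₀)(x) = min {1, 2(M(U,W₀)(x) - pU'(x)) / (rxU'(x))}`, the supremum in `L*(U,W₀)`
is attained at `γ̃(U,W₀)(x)` and `L_{γ̃(U,W₀)(x)}(U,W₀)(x) = 0` for all `x > x₀`. -/
theorem continuation_gamma_formula
    (p β c r σ : ℝ) (hp : 0 < p) (hβ : 0 < β) (hr : 0 < r) (hrc : r < c) (hσ : 0 < σ)
    (F : StieltjesFunction ℝ)
    (hF01 : ∀ x : ℝ, F x ∈ Icc (0 : ℝ) 1)
    (hF0 : ∀ x : ℝ, x ≤ 0 → F x = 0)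
    (hF1 : Tendsto (⇑F) atTop (nhds 1))
    (hFmean : IntegrableOn id (Ici (0 : ℝ)) F.measure)
    (hFd : ∃ f : ℝ → ℝ, Measurable f ∧ (∃ C : ℝ, ∀ t, |f t| ≤ C) ∧ (∀ t, 0 ≤ f t) ∧
      (∀ t : ℝ, t ≤ 0 → f t = 0) ∧ ∀ x : ℝ, F x = ∫ t in (0 : ℝ)..x, f t)
    (x₀ : ℝ) (hx₀ : 0 < x₀)
    (W₀ : ℝ → ℝ)
    (hW₀c : ContinuousOn W₀ (Icc 0 x₀))
    (hW₀pos : ∀ x ∈ Icc (0 : ℝ) x₀, 0 < W₀ x)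
    (hW₀mono : StrictMonoOn W₀ (Icc 0 x₀))
    (d₀ : ℝ) (hd₀ : HasDerivWithinAt W₀ d₀ (Icc 0 x₀) x₀)
    (U : ℝ → ℝ)
    (hUc : ContinuousOn U (Ici x₀)) (hU2 : ContDiffOn ℝ 2 U (Ioi x₀))
    (hUx₀ : U x₀ = W₀ x₀) (hUd : HasDerivWithinAt U d₀ (Ici x₀) x₀)
    (hUsol : ∀ x ∈ Ioi x₀, Lstar2 p β c r σ F x₀ U W₀ x = 0) :
    ∀ x ∈ Ioi x₀,
      Lstar2 p β c r σ F x₀ U W₀ x =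
        Lg2 p β c r σ F x₀
          (min 1 (2 * (Mop2 β c F x₀ U W₀ x - p * deriv U x) / (r * x * deriv U x)))
          U W₀ x ∧
      Lg2 p β c r σ F x₀
        (min 1 (2 * (Mop2 β c F x₀ U W₀ x - p * deriv U x) / (r * x * deriv U x)))
        U W₀ x = 0 :=
  continuation_gamma_formula_general p β c r σ hp hβ hr hrc hσ F hF01 hF0 x₀ hx₀ W₀ hW₀pos hW₀mono
    d₀ hd₀ U hUc hU2 hUx₀ hUd hUsol
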